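/- arXiv:2501.16488 — 4 statements merged into one kernel-verified Lean document; each statement's English description precedes it below -/
import Mathlib

section
/- With σ, T, σ_Ξ, σ_β, γ > 0, ε ≥ 0, and σ_e = sqrt(σ_Ξ² + ε²γ²(σ²T + σ_β²)), let v > 0 be defined by σ_e/v = x* + εγ, where x* ∈ (0, 1/(γσ²T)) is the unique root of x²/(1 − γσ²T x) − (2ε/(σ²T)) log(1 − γσ²T x) = σ_Ξ²/(σ²T) + ε²γ² σ_β²/(σ²T). Then 1 > vεγ/σ_e > 1/(1 + 1/(εγ²σ²T)) whenever ε > 0. -/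
theorem stmt_1 (σ T σΞ σβ γ ε : ℝ) (hσ : 0 < σ) (hT : 0 < T) (hσΞ : 0 < σΞ)
    (hσβ : 0 < σβ) (hγ : 0 < γ) (hε : 0 < ε)
    (σe : ℝ) (hσe : σe = Real.sqrt (σΞ^2 + ε^2 * γ^2 * (σ^2 * T + σβ^2)))
    (xstar : ℝ) (hx : xstar ∈ Set.Ioo 0 (1 / (γ * σ^2 * T)))
    (hroot : xstar^2 / (1 - γ * σ^2 * T * xstar)
      - (2 * ε / (σ^2 * T)) * Real.log (1 - γ * σ^2 * T * xstar)
      = σΞ^2 / (σ^2 * T) + ε^2 * γ^2 * σβ^2 / (σ^2 * T))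
    (v : ℝ) (hv : σe / v = xstar + ε * γ) (hvpos : 0 < v) :
    1 > v * ε * γ / σe ∧ v * ε * γ / σe > 1 / (1 + 1 / (ε * γ^2 * σ^2 * T)) := by
  obtain ⟨hx1, hx2⟩ := hx
  have hσe0 : 0 < σe := by
    rw [hσe]; positivity
  have hsum : 0 < xstar + ε * γ := by positivity
  have hσe' : σe = v * (xstar + ε * γ) := by
    field_simp at hv; linarith
  have hx2' : xstar * (γ * σ^2 * T) < 1 := by
    exact (lt_div_iff₀ (by positivity)).mp hx2
  rw [hσe']
  constructor
  · rw [gt_iff_lt, div_lt_one (by positivity)]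
    nlinarith [mul_pos hvpos hx1]
  · rw [gt_iff_lt, div_lt_div_iff₀ (by positivity) (by positivity)]
    have h1 : (0:ℝ) < ε * γ^2 * σ^2 * T := by positivity
    have key : v * xstar < v * ε * γ * (1 / (ε * γ^2 * σ^2 * T)) := by
      rw [mul_one_div, lt_div_iff₀ h1]
      nlinarith [mul_pos (mul_pos hvpos hε) hγ]
    nlinarith [key]
end

section
/- Let Λ > 0 and γ, σ, T > 0 with 1 − Λγσ²T > 0, and define k_t = (1 − c γσ²Λ(T−t))/(1 − γσ²Λ(T−t)) for a constant c with c = vεγ/σ_e, where v, ε, γ, σ_e > 0 and Λ = σ_e/v − εγ > 0. If v satisfies the defining equation (σ_e/v − εγ)²/(1 − γσ²T(σ_e/v − εγ)) − (2ε/(σ²T)) log(1 − γσ²T(σ_e/v − εγ)) = σ_Ξ²/(σ²T) + ε²γ² σ_β²/(σ²T) with σ_e² = σ_Ξ² + ε²γ²(σ²T + σ_β²), then (1/T)∫₀ᵀ k_t² dt = v²/(σ²T). -/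
/-!
With `a = γσ²Λ` one has `k t = c + (1 - c) / (1 - a (T - t))`, so `∫₀ᵀ k²` has the closed form
`c²T - 2c(1-c)/a · log(1 - aT) + (1-c)²T/(1 - aT)`. Since `σe = v(Λ + εγ)`, the weights are
`c = εγ/(Λ + εγ)` and `1 - c = Λ/(Λ + εγ)`, so `σ²(Λ + εγ)²` times the integral is
`ε²γ²σ²T + Λ²σ²T/(1 - aT) - 2ε log(1 - aT)`. By the defining equation of `v` this equals
`ε²γ²σ²T + σΞ² + ε²γ²σβ² = σe² = v²(Λ + εγ)²`.
-/

section
variable {a c : ℝ}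

theorem hasDerivAt_primitive_sq_div_one_sub_mul {s : ℝ} (ha : a ≠ 0) (hs : a * s < 1) :
    HasDerivAt
      (fun s => c ^ 2 * s - 2 * c * (1 - c) / a * Real.log (1 - a * s) + (1 - c) ^ 2 / a * (1 - a * s)⁻¹)
      (((1 - c * a * s) / (1 - a * s)) ^ 2) s := by
  have hne : 1 - a * s ≠ 0 := by linarith
  have hlin : HasDerivAt (fun s => 1 - a * s) (-a) s := by
    simpa using ((hasDerivAt_id s).const_mul a).const_sub 1
  refine ((((hasDerivAt_id s).const_mul (c ^ 2)).sub
    ((hlin.log hne).const_mul (2 * c * (1 - c) / a))).add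
    ((hlin.inv hne).const_mul ((1 - c) ^ 2 / a))).congr_deriv ?_
  field_simp
  ring

theorem integral_sq_div_one_sub_mul {T : ℝ} (ha : a ≠ 0) (hT : 0 ≤ T) (haT : a * T < 1) :
    ∫ s in (0 : ℝ)..T, ((1 - c * a * s) / (1 - a * s)) ^ 2
      = c ^ 2 * T - 2 * c * (1 - c) / a * Real.log (1 - a * T) + (1 - c) ^ 2 * T / (1 - a * T) := by
  have hlt : ∀ s ∈ Set.uIcc 0 T, a * s < 1 := by
    intro s hs
    rw [Set.uIcc_of_le hT] at hs
    rcases le_total 0 a with ha' | ha'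
    · nlinarith [hs.2]
    · nlinarith [hs.1]
  rw [intervalIntegral.integral_eq_sub_of_hasDerivAt
    (fun s hs => hasDerivAt_primitive_sq_div_one_sub_mul ha (hlt s hs))]
  · have hne : 1 - a * T ≠ 0 := by linarith
    have hinv : (1 - c) ^ 2 / a * (1 - a * T)⁻¹ - (1 - c) ^ 2 / a
        = (1 - c) ^ 2 * T / (1 - a * T) := by
      field_simp
      ring
    simp only [mul_zero, sub_zero, Real.log_one, inv_one]
    linarith
  · refine ((ContinuousOn.div (by fun_prop) (by fun_prop) ?_).pow 2).intervalIntegrable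
    intro s hs
    linarith [hlt s hs]

theorem integral_sq_div_one_sub_mul_sub {T : ℝ} (ha : a ≠ 0) (hT : 0 ≤ T) (haT : a * T < 1) :
    ∫ t in (0 : ℝ)..T, ((1 - c * a * (T - t)) / (1 - a * (T - t))) ^ 2
      = c ^ 2 * T - 2 * c * (1 - c) / a * Real.log (1 - a * T) + (1 - c) ^ 2 * T / (1 - a * T) := by
  rw [intervalIntegral.integral_comp_sub_left (fun s => ((1 - c * a * s) / (1 - a * s)) ^ 2),
    sub_self, sub_zero, integral_sq_div_one_sub_mul ha hT haT]

end

theorem closedForm_eq_sq_div_sq {σ T γ ε v Λ L : ℝ} (hσ : σ ≠ 0) (hγ : γ ≠ 0) (hΛ : Λ ≠ 0)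
    (hS : Λ + ε * γ ≠ 0)
    (hv : v ^ 2 * (Λ + ε * γ) ^ 2
      = ε ^ 2 * γ ^ 2 * σ ^ 2 * T + (Λ ^ 2 * σ ^ 2 * T / (1 - γ * σ ^ 2 * Λ * T) - 2 * ε * L)) :
    (ε * γ / (Λ + ε * γ)) ^ 2 * T - 2 * (ε * γ / (Λ + ε * γ)) * (Λ / (Λ + ε * γ)) / (γ * σ ^ 2 * Λ) * L
      + (Λ / (Λ + ε * γ)) ^ 2 * T / (1 - γ * σ ^ 2 * Λ * T) = v ^ 2 / σ ^ 2 := by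
  rw [eq_div_iff (by positivity), ← mul_right_inj' (pow_ne_zero 2 hS), mul_comm _ (v ^ 2), hv]
  field_simp
  ring

theorem stmt_3_general (σ T σΞ σβ γ ε v σe : ℝ)
    (hσ : 0 < σ) (hT : 0 < T) (hσΞ : 0 < σΞ)
    (hγ : 0 < γ) (hv : 0 < v)
    (hσe : σe = Real.sqrt (σΞ^2 + ε^2 * γ^2 * (σ^2 * T + σβ^2)))
    (Λ : ℝ) (hΛdef : Λ = σe / v - ε * γ) (hΛ : 0 < Λ)
    (hΛT : Λ * γ * σ^2 * T < 1)
    (c : ℝ) (hc : c = v * ε * γ / σe)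
    (k : ℝ → ℝ)
    (hk : ∀ t, k t = (1 - c * γ * σ^2 * Λ * (T - t)) / (1 - γ * σ^2 * Λ * (T - t)))
    (hroot : (σe / v - ε * γ)^2 / (1 - γ * σ^2 * T * (σe / v - ε * γ))
      - (2 * ε / (σ^2 * T)) * Real.log (1 - γ * σ^2 * T * (σe / v - ε * γ))
      = σΞ^2 / (σ^2 * T) + ε^2 * γ^2 * σβ^2 / (σ^2 * T)) :
    (1 / T) * ∫ t in (0:ℝ)..T, (k t)^2 = v^2 / (σ^2 * T) := by
  have ha0 : γ * σ ^ 2 * Λ ≠ 0 := by positivity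
  have hD : 1 - γ * σ ^ 2 * Λ * T ≠ 0 := by linarith
  have hσe_pos : 0 < σe := by
    rw [hσe]
    positivity
  have hσe_eq : σe = v * (Λ + ε * γ) := by
    rw [hΛdef]
    field_simp
    ring
  have hS : Λ + ε * γ ≠ 0 := right_ne_zero_of_mul (hσe_eq ▸ hσe_pos.ne')
  have hc' : c = ε * γ / (Λ + ε * γ) := by
    rw [hc, hσe_eq]
    field_simp
  have h1c : 1 - c = Λ / (Λ + ε * γ) := by
    rw [hc']
    field_simp
    ring
  rw [← hΛdef, show γ * σ ^ 2 * T * Λ = γ * σ ^ 2 * Λ * T by ring] at hroot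
  set L := Real.log (1 - γ * σ ^ 2 * Λ * T)
  have hv_sq : v ^ 2 * (Λ + ε * γ) ^ 2
      = ε ^ 2 * γ ^ 2 * σ ^ 2 * T + (Λ ^ 2 * σ ^ 2 * T / (1 - γ * σ ^ 2 * Λ * T) - 2 * ε * L) := by
    rw [← mul_pow, ← hσe_eq, hσe, Real.sq_sqrt (by positivity)]
    have hσT : σ ^ 2 * T ≠ 0 := by positivity
    field_simp at hroot
    linear_combination -hroot
  have hk' : ∀ t, k t = (1 - c * (γ * σ ^ 2 * Λ) * (T - t)) / (1 - γ * σ ^ 2 * Λ * (T - t)) :=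
    fun t => by rw [hk]; ring
  simp only [hk']
  rw [integral_sq_div_one_sub_mul_sub ha0 hT.le (by linarith), h1c, hc',
    closedForm_eq_sq_div_sq hσ.ne' hγ.ne' hΛ.ne' hS hv_sq]
  field_simp

theorem stmt_3 (σ T σΞ σβ γ ε v σe : ℝ)
    (hσ : 0 < σ) (hT : 0 < T) (hσΞ : 0 < σΞ) (hσβ : 0 < σβ)
    (hγ : 0 < γ) (hε : 0 < ε) (hv : 0 < v)
    (hσe : σe = Real.sqrt (σΞ^2 + ε^2 * γ^2 * (σ^2 * T + σβ^2)))
    (Λ : ℝ) (hΛdef : Λ = σe / v - ε * γ) (hΛ : 0 < Λ)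
    (hΛT : Λ * γ * σ^2 * T < 1)
    (c : ℝ) (hc : c = v * ε * γ / σe)
    (k : ℝ → ℝ)
    (hk : ∀ t, k t = (1 - c * γ * σ^2 * Λ * (T - t)) / (1 - γ * σ^2 * Λ * (T - t)))
    (hroot : (σe / v - ε * γ)^2 / (1 - γ * σ^2 * T * (σe / v - ε * γ))
      - (2 * ε / (σ^2 * T)) * Real.log (1 - γ * σ^2 * T * (σe / v - ε * γ))
      = σΞ^2 / (σ^2 * T) + ε^2 * γ^2 * σβ^2 / (σ^2 * T)) :
    (1 / T) * ∫ t in (0:ℝ)..T, (k t)^2 = v^2 / (σ^2 * T) :=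
  stmt_3_general σ T σΞ σβ γ ε v σe hσ hT hσΞ hγ hv hσe Λ hΛdef hΛ hΛT c hc k hk hroot
end

section
/- Let ε, γ, v, σ_e > 0 and set Λ = σ_e/v − εγ, assumed positive. For the quadratic surplus S(x, ξ) = ξx − (εγ/2)x² and the functions Γ(χ) = (Λ/2)(χ−m)² + (m_Ξ − εγ(m_β + m))(χ−m) − (εγ/2)m² and Γ^c(z,ξ) = (1/2)(−2ξz − εγ z² + (v/σ_e)(ξ − m_Ξ + εγ(z + m_β))² + 2m(ξ + εγ z)), the duality inequality Γ(χ) + Γ^c(z,ξ) ≥ S(χ − z, ξ) holds for all real χ, z, ξ, with equality if and only if χ = m + (v/σ_e)((ξ − m_Ξ) + εγ(z + m_β)). -/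
theorem stmt_11 (ε γ v σe m mΞ mβ : ℝ)
    (hε : 0 < ε) (hγ : 0 < γ) (hv : 0 < v) (hσe : 0 < σe)
    (Λ : ℝ) (hΛdef : Λ = σe / v - ε * γ) (hΛ : 0 < Λ)
    (S : ℝ → ℝ → ℝ) (hS : ∀ x ξ, S x ξ = ξ * x - (ε * γ / 2) * x^2)
    (Γ : ℝ → ℝ)
    (hΓ : ∀ χ, Γ χ = (Λ / 2) * (χ - m)^2 + (mΞ - ε * γ * (mβ + m)) * (χ - m)
      - (ε * γ / 2) * m^2)
    (Γc : ℝ → ℝ → ℝ)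
    (hΓc : ∀ z ξ, Γc z ξ = (1/2) * (-2 * ξ * z - ε * γ * z^2
      + (v / σe) * (ξ - mΞ + ε * γ * (z + mβ))^2 + 2 * m * (ξ + ε * γ * z))) :
    ∀ χ z ξ : ℝ, Γ χ + Γc z ξ ≥ S (χ - z) ξ ∧
      (Γ χ + Γc z ξ = S (χ - z) ξ ↔
        χ = m + (v / σe) * ((ξ - mΞ) + ε * γ * (z + mβ))) := by
  intro χ z ξ
  have hv' : v ≠ 0 := ne_of_gt hv
  have hσ' : σe ≠ 0 := ne_of_gt hσe
  have key : Γ χ + Γc z ξ - S (χ - z) ξ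
      = (σe / (2 * v)) * (χ - (m + (v / σe) * ((ξ - mΞ) + ε * γ * (z + mβ))))^2 := by
    rw [hΓ, hΓc, hS, hΛdef]
    field_simp
    ring
  have hc : 0 < σe / (2 * v) := by positivity
  constructor
  · nlinarith [sq_nonneg (χ - (m + (v / σe) * ((ξ - mΞ) + ε * γ * (z + mβ))))]
  · constructor
    · intro h
      have h0 : (σe / (2 * v)) * (χ - (m + (v / σe) * ((ξ - mΞ) + ε * γ * (z + mβ))))^2 = 0 := by
        rw [← key]; linarith
      have := mul_eq_zero.mp h0
      rcases this with h1 | h2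
      · exact absurd h1 (ne_of_gt hc)
      · have := pow_eq_zero_iff (n := 2) (by norm_num) |>.mp h2
        linarith
    · intro h
      have : (χ - (m + (v / σe) * ((ξ - mΞ) + ε * γ * (z + mβ))))^2 = 0 := by
        rw [h]; ring
      nlinarith [key]
end

section
/- Let f: [0,T) → ℝ be continuous with f(t) ~ c/(T−t) as t → T⁻ for some c > 0 (i.e., (T−t)f(t) → c), and let x: [0,T) → ℝ solve x'(t) = −f(t) x(t) + g(t) with g continuous and bounded on [0,T). Then x(t) → 0 as t → T⁻. -/
open Filter Set Topology

/-!
Fix `ε > 0` and an upper bound `C` of `g`. Near `T` we have `f t > c / (2 (T - t))` and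
`f t * ε > 2 C`, since `f → ∞`. There the function
`ε / 2 + K (T - t) ^ (c / 2)` is an upper barrier for `x`: wherever `x` touches it,
`x' = -f x + g < -f K (T - t) ^ (c / 2)`, which is below the barrier's slope. By the fencing
theorem `x` stays under the barrier, which tends to `ε / 2`. The same argument for `-x`
gives the lower bound.
-/

theorem tendsto_sub_nhdsLT_nhdsGT_zero (T : ℝ) : Tendsto (fun t => T - t) (𝓝[<] T) (𝓝[>] 0) := by
  refine tendsto_nhdsWithin_of_tendsto_nhds_of_eventually_within _ ?_ ?_
  · have h : Tendsto (fun t => T - t) (𝓝 T) (𝓝 (T - T)) := tendsto_const_nhds.sub tendsto_id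
    rw [sub_self] at h
    exact h.mono_left nhdsWithin_le_nhds
  · filter_upwards [self_mem_nhdsWithin] with t (ht : t < T) using sub_pos.2 ht

theorem tendsto_atTop_of_sub_mul_tendsto {T c : ℝ} (hc : 0 < c) {f : ℝ → ℝ}
    (hf : Tendsto (fun t => (T - t) * f t) (𝓝[<] T) (𝓝 c)) : Tendsto f (𝓝[<] T) atTop := by
  refine (hf.pos_mul_atTop hc (tendsto_sub_nhdsLT_nhdsGT_zero T).inv_tendsto_nhdsGT_zero).congr' ?_
  filter_upwards [self_mem_nhdsWithin] with t (ht : t < T)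
  rw [Pi.inv_apply, mul_right_comm, mul_inv_cancel₀ (sub_ne_zero.2 ht.ne'), one_mul]

theorem hasDerivAt_sub_rpow {T t : ℝ} (κ : ℝ) (ht : t < T) :
    HasDerivAt (fun s => (T - s) ^ κ) (-(κ * (T - t) ^ κ / (T - t))) t := by
  have hne : T - t ≠ 0 := sub_ne_zero.2 ht.ne'
  refine (((hasDerivAt_id t).const_sub T).rpow_const (p := κ) (Or.inl hne)).congr_deriv ?_
  rw [id, Real.rpow_sub_one hne]
  ring

theorem tendsto_sub_rpow_nhdsLT {T κ : ℝ} (hκ : 0 < κ) :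
    Tendsto (fun t => (T - t) ^ κ) (𝓝[<] T) (𝓝 0) := by
  have h := (Real.continuousAt_rpow_const 0 κ (Or.inr hκ.le)).tendsto
  rw [Real.zero_rpow hκ.ne'] at h
  exact h.comp ((tendsto_sub_nhdsLT_nhdsGT_zero T).mono_right nhdsWithin_le_nhds)

theorem image_le_of_deriv_lt_deriv_boundary_Ico {x x' B B' : ℝ → ℝ} {a T : ℝ}
    (hx : ∀ t ∈ Ico a T, HasDerivWithinAt x (x' t) (Ico a T) t)
    (hB : ∀ t ∈ Ico a T, HasDerivWithinAt B (B' t) (Ico a T) t)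
    (ha : x a ≤ B a) (bound : ∀ t ∈ Ico a T, x t = B t → x' t < B' t) :
    ∀ t ∈ Ico a T, x t ≤ B t := by
  intro t ht
  have hsub : Icc a t ⊆ Ico a T := Icc_subset_Ico_right ht.2
  have hnhds : ∀ s ∈ Ico a t, Ico a T ∈ 𝓝[Ici s] s := fun s hs =>
    mem_of_superset (Ico_mem_nhdsGE (hs.2.trans ht.2)) (Ico_subset_Ico_left hs.1)
  have hsub' : Ico a t ⊆ Ico a T := Ico_subset_Icc_self.trans hsub
  exact image_le_of_deriv_right_lt_deriv_boundary'
    (fun s hs => (hx s (hsub hs)).continuousWithinAt.mono hsub)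
    (fun s hs => (hx s (hsub' hs)).mono_of_mem_nhdsWithin (hnhds s hs)) ha
    (fun s hs => (hB s (hsub hs)).continuousWithinAt.mono hsub)
    (fun s hs => (hB s (hsub' hs)).mono_of_mem_nhdsWithin (hnhds s hs))
    (fun s hs => bound s (hsub' hs)) ⟨ht.1, le_rfl⟩

theorem eventually_lt_of_hasDerivWithinAt_neg_mul_add {T c C ε : ℝ} (hT : 0 < T) (hc : 0 < c)
    (hε : 0 < ε) {f g x : ℝ → ℝ} (hgC : ∀ t ∈ Ico 0 T, g t ≤ C)
    (hfc : Tendsto (fun t => (T - t) * f t) (𝓝[<] T) (𝓝 c))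
    (hx : ∀ t ∈ Ico 0 T, HasDerivWithinAt x (-(f t) * x t + g t) (Ico 0 T) t) :
    ∀ᶠ t in 𝓝[<] T, x t < ε := by
  have hnear : ∀ᶠ t in 𝓝[<] T, 0 < t ∧ c / 2 < (T - t) * f t ∧ 2 * C / ε < f t := by
    filter_upwards [Ioo_mem_nhdsLT hT, hfc.eventually (lt_mem_nhds (half_lt_self hc)),
      (tendsto_atTop_of_sub_mul_tendsto hc hfc).eventually_gt_atTop _] with t ht hκf hCf
    exact ⟨ht.1, hκf, hCf⟩
  obtain ⟨a, haT, ha⟩ := mem_nhdsLT_iff_exists_Ico_subset.1 hnear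
  have ha0 : 0 < a := (ha ⟨le_rfl, haT⟩).1
  set κ := c / 2
  set K := |x a| / (T - a) ^ κ
  have hTa : 0 < T - a := sub_pos.2 haT
  have hK : 0 ≤ K := div_nonneg (abs_nonneg _) (Real.rpow_nonneg hTa.le κ)
  have hle : ∀ t ∈ Ico a T, x t ≤ ε / 2 + K * (T - t) ^ κ := by
    refine image_le_of_deriv_lt_deriv_boundary_Ico
      (fun t ht => (hx t ⟨ha0.le.trans ht.1, ht.2⟩).mono (Ico_subset_Ico_left ha0.le))
      (fun t ht => (((hasDerivAt_sub_rpow κ ht.2).const_mul K).const_add (ε / 2)).hasDerivWithinAt)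
      ?_ ?_
    · have : K * (T - a) ^ κ = |x a| :=
        div_mul_cancel₀ _ (Real.rpow_pos_of_pos hTa κ).ne'
      linarith [le_abs_self (x a)]
    · rintro t ht hxt
      obtain ⟨-, hκf, hCf⟩ := ha ht
      have hs : 0 < T - t := sub_pos.2 ht.2
      have hp : 0 < (T - t) ^ κ := Real.rpow_pos_of_pos hs κ
      have hCf' : 2 * C < f t * ε := (div_lt_iff₀ hε).1 hCf
      have hκ : κ * (T - t) ^ κ / (T - t) ≤ f t * (T - t) ^ κ := by
        rw [div_le_iff₀ hs]; nlinarith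
      rw [hxt]
      nlinarith [mul_le_mul_of_nonneg_left hκ hK, hgC t ⟨ha0.le.trans ht.1, ht.2⟩]
  have hB : Tendsto (fun t => ε / 2 + K * (T - t) ^ κ) (𝓝[<] T) (𝓝 (ε / 2)) := by
    simpa using ((tendsto_sub_rpow_nhdsLT (half_pos hc)).const_mul K).const_add (ε / 2)
  filter_upwards [Ico_mem_nhdsLT haT, hB.eventually (gt_mem_nhds (half_lt_self hε))] with t ht hBt
  exact (hle t ht).trans_lt hBt

theorem stmt_19_general (T c : ℝ) (hT : 0 < T) (hc : 0 < c)
    (f g x : ℝ → ℝ)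
    (hgbdd : ∃ C : ℝ, ∀ t ∈ Set.Ico (0:ℝ) T, |g t| ≤ C)
    (hfc : Tendsto (fun t => (T - t) * f t) (nhdsWithin T (Set.Iio T)) (nhds c))
    (hx : ∀ t ∈ Set.Ico (0:ℝ) T,
      HasDerivWithinAt x (-(f t) * x t + g t) (Set.Ico 0 T) t) :
    Tendsto x (nhdsWithin T (Set.Iio T)) (nhds 0) := by
  obtain ⟨C, hC⟩ := hgbdd
  have hneg : ∀ t ∈ Ico 0 T,
      HasDerivWithinAt (fun t => -x t) (-(f t) * -x t + -g t) (Ico 0 T) t := fun t ht =>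
    (hx t ht).neg.congr_deriv (by ring)
  refine tendsto_order.2 ⟨fun b hb => ?_, fun b hb =>
    eventually_lt_of_hasDerivWithinAt_neg_mul_add hT hc hb (fun t ht => (abs_le.1 (hC t ht)).2) hfc hx⟩
  filter_upwards [eventually_lt_of_hasDerivWithinAt_neg_mul_add hT hc (neg_pos.2 hb)
    (fun t ht => neg_le.1 (abs_le.1 (hC t ht)).1) hfc hneg] with t ht
  linarith

theorem stmt_19 (T c : ℝ) (hT : 0 < T) (hc : 0 < c)
    (f g x : ℝ → ℝ)
    (hf : ContinuousOn f (Set.Ico 0 T))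
    (hg : ContinuousOn g (Set.Ico 0 T))
    (hgbdd : ∃ C : ℝ, ∀ t ∈ Set.Ico (0:ℝ) T, |g t| ≤ C)
    (hfc : Tendsto (fun t => (T - t) * f t) (nhdsWithin T (Set.Iio T)) (nhds c))
    (hx : ∀ t ∈ Set.Ico (0:ℝ) T,
      HasDerivWithinAt x (-(f t) * x t + g t) (Set.Ico 0 T) t) :
    Tendsto x (nhdsWithin T (Set.Iio T)) (nhds 0) :=
  stmt_19_general T c hT hc f g x hgbdd hfc hx
end
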